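/- Let G be a group and let Θ(G) be the kernel of the epimorphism ρ : ν(G) → G determined by g ↦ g and h^φ ↦ h. Then Θ(G) centralizes the subgroup [G, G^φ] of ν(G), i.e. every element of Θ(G) commutes with every element of [G, G^φ]. -/

import Mathlib

namespace TensorNu

universe u

/-- The commutator `[x,y] = x⁻¹y⁻¹xy`. -/
def comm {K : Type*} [Group K] (x y : K) : K := x⁻¹ * y⁻¹ * x * y

/-- Conjugation `x^y = y⁻¹xy`. -/
def conj {K : Type*} [Group K] (x y : K) : K := y⁻¹ * x * y

variable (G : Type u) [Group G]

/-- The defining relators of `ν(G)`, as elements of the free group on `G ⊕ G`,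
where `Sum.inl` corresponds to the canonical copy of `G` and `Sum.inr` to the
isomorphic copy `G^φ` (`g ↦ g^φ`).  They comprise the multiplication tables of
`G` and of `G^φ`, together with the relations
`[g₁,g₂^φ]^{g₃} = [g₁^{g₃},(g₂^{g₃})^φ]` and `[g₁,g₂^φ]^{g₃} = [g₁,g₂^φ]^{g₃^φ}`. -/
def nuRels : Set (FreeGroup (G ⊕ G)) :=
  {r | (∃ g h : G, r = FreeGroup.of (Sum.inl g) * FreeGroup.of (Sum.inl h) *
          (FreeGroup.of (Sum.inl (g * h)))⁻¹)
     ∨ (∃ g h : G, r = FreeGroup.of (Sum.inr g) * FreeGroup.of (Sum.inr h) *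
          (FreeGroup.of (Sum.inr (g * h)))⁻¹)
     ∨ (∃ g₁ g₂ g₃ : G, r =
          conj (comm (FreeGroup.of (Sum.inl g₁)) (FreeGroup.of (Sum.inr g₂)))
              (FreeGroup.of (Sum.inl g₃)) *
            (comm (FreeGroup.of (Sum.inl (conj g₁ g₃)))
              (FreeGroup.of (Sum.inr (conj g₂ g₃))))⁻¹)
     ∨ (∃ g₁ g₂ g₃ : G, r =
          conj (comm (FreeGroup.of (Sum.inl g₁)) (FreeGroup.of (Sum.inr g₂)))
              (FreeGroup.of (Sum.inl g₃)) *
            (conj (comm (FreeGroup.of (Sum.inl g₁)) (FreeGroup.of (Sum.inr g₂)))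
              (FreeGroup.of (Sum.inr g₃)))⁻¹)}

/-- The group `ν(G)`. -/
abbrev Nu := PresentedGroup (nuRels G)

/-- The canonical image of `g ∈ G` in `ν(G)`. -/
def ι (g : G) : Nu G := PresentedGroup.of (Sum.inl g)

/-- The canonical image `g^φ` of `g ∈ G` (via the copy `G^φ`) in `ν(G)`. -/
def ιφ (g : G) : Nu G := PresentedGroup.of (Sum.inr g)

/-- The set `T⊗(G)` of tensors `[a, b^φ]`, `a, b ∈ G`. -/
def tensorSet : Set (Nu G) := {x | ∃ a b : G, x = comm (ι G a) (ιφ G b)}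

/-- The image of `G` in `ν(G)` as a subgroup. -/
def GSub : Subgroup (Nu G) := Subgroup.closure (Set.range (ι G))

/-- The image of `G^φ` in `ν(G)` as a subgroup. -/
def GφSub : Subgroup (Nu G) := Subgroup.closure (Set.range (ιφ G))

/-- The non-abelian tensor square `[G, G^φ] ≤ ν(G)`. -/
def tensorSquare : Subgroup (Nu G) := ⁅GSub G, GφSub G⁆

/-- `[S, x]`: the subgroup generated by the commutators `[s, x]`, `s ∈ S`. -/
def commSub {K : Type*} [Group K] (S : Set K) (x : K) : Subgroup K :=
  Subgroup.closure {c | ∃ s ∈ S, c = comm s x}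

end TensorNu

/-!
Relation 3 says that conjugation by `g` permutes the tensors `[a, b^φ]`, and relation 4 that
conjugation by `g^φ` acts on them exactly as conjugation by `g`. Hence `[G, G^φ]`, which the
tensors generate, is normal, and the conjugation action `ν(G) → Aut [G, G^φ]` agrees on
generators with conjugation by the image of `ρ x` in `ν(G)`. The action thus factors through
`ρ`, so `ker ρ` acts trivially.
-/

theorem MulAut.ker_conjNormal {K : Type*} [Group K] (H : Subgroup K) [H.Normal] :
    (MulAut.conjNormal : K →* MulAut H).ker = Subgroup.centralizer H := by
  ext x
  simp only [MonoidHom.mem_ker, Subgroup.mem_centralizer_iff, MulEquiv.ext_iff, Subtype.ext_iff,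
    MulAut.conjNormal_apply, MulAut.one_apply, Subtype.forall, mul_inv_eq_iff_eq_mul]
  exact ⟨fun h y hy => (h y hy).symm, fun h y hy => (h y hy).symm⟩

namespace TensorNu

open Subgroup
open scoped commutatorElement

variable {G : Type u} [Group G]

theorem ι_mul (g h : G) : ι G g * ι G h = ι G (g * h) :=
  PresentedGroup.mk_eq_mk_of_mul_inv_mem (Or.inl ⟨g, h, rfl⟩)

theorem ιφ_mul (g h : G) : ιφ G g * ιφ G h = ιφ G (g * h) :=
  PresentedGroup.mk_eq_mk_of_mul_inv_mem (Or.inr (Or.inl ⟨g, h, rfl⟩))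

variable (G) in
def ιHom : G →* Nu G := MonoidHom.mk' (ι G) fun g h => (ι_mul g h).symm

variable (G) in
def ιφHom : G →* Nu G := MonoidHom.mk' (ιφ G) fun g h => (ιφ_mul g h).symm

theorem ι_inv (g : G) : ι G g⁻¹ = (ι G g)⁻¹ := map_inv (ιHom G) g

theorem ιφ_inv (g : G) : ιφ G g⁻¹ = (ιφ G g)⁻¹ := map_inv (ιφHom G) g

theorem conj_comm_ι (a b g : G) :
    conj (comm (ι G a) (ιφ G b)) (ι G g) = comm (ι G (conj a g)) (ιφ G (conj b g)) := by
  have := PresentedGroup.one_of_mem (rels := nuRels G) (Or.inr (Or.inr (Or.inl ⟨a, b, g, rfl⟩)))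
  rwa [map_mul, map_inv, mul_inv_eq_one] at this

theorem conj_comm_ι_eq_conj_comm_ιφ (a b g : G) :
    conj (comm (ι G a) (ιφ G b)) (ι G g) = conj (comm (ι G a) (ιφ G b)) (ιφ G g) := by
  have := PresentedGroup.one_of_mem (rels := nuRels G) (Or.inr (Or.inr (Or.inr ⟨a, b, g, rfl⟩)))
  rwa [map_mul, map_inv, mul_inv_eq_one] at this

theorem GSub_eq_range : GSub G = (ιHom G).range := by
  rw [GSub, ← (ιHom G).range.closure_eq]
  rfl

theorem GφSub_eq_range : GφSub G = (ιφHom G).range := by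
  rw [GφSub, ← (ιφHom G).range.closure_eq]
  rfl

theorem commutatorElement_ι_ιφ (a b : G) : ⁅ι G a, ιφ G b⁆ = comm (ι G a⁻¹) (ιφ G b⁻¹) := by
  simp only [commutatorElement_def, comm, ι_inv, ιφ_inv, inv_inv]

variable (G) in
theorem tensorSquare_eq_closure_tensorSet : tensorSquare G = closure (tensorSet G) := by
  rw [tensorSquare, Subgroup.commutator_def, GSub_eq_range, GφSub_eq_range]
  congr 1
  ext x
  constructor
  · rintro ⟨_, ⟨a, rfl⟩, _, ⟨b, rfl⟩, rfl⟩
    exact ⟨a⁻¹, b⁻¹, commutatorElement_ι_ιφ a b⟩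
  · rintro ⟨a, b, rfl⟩
    refine ⟨_, ⟨a⁻¹, rfl⟩, _, ⟨b⁻¹, rfl⟩, ?_⟩
    simp only [ιHom, ιφHom, MonoidHom.mk'_apply, commutatorElement_ι_ιφ, inv_inv]

theorem conj_ι_mem_tensorSet {t : Nu G} (ht : t ∈ tensorSet G) (g : G) :
    conj t (ι G g) ∈ tensorSet G := by
  obtain ⟨a, b, rfl⟩ := ht
  exact ⟨_, _, conj_comm_ι a b g⟩

theorem ι_mul_inv_ιφ_mem_centralizer (g : G) :
    ι G g * (ιφ G g)⁻¹ ∈ centralizer (tensorSet G) := by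
  rintro _ ⟨a, b, rfl⟩
  have h := conj_comm_ι_eq_conj_comm_ιφ a b g
  simp only [conj] at h
  calc comm (ι G a) (ιφ G b) * (ι G g * (ιφ G g)⁻¹)
      = ι G g * ((ι G g)⁻¹ * comm (ι G a) (ιφ G b) * ι G g) * (ιφ G g)⁻¹ := by group
    _ = ι G g * (ιφ G g)⁻¹ * comm (ι G a) (ιφ G b) := by rw [h]; group

variable (G) in
theorem normalizer_tensorSet : normalizer (tensorSet G) = ⊤ := by
  have hι : ∀ g, ι G g ∈ normalizer (tensorSet G) := fun g t => by
    constructor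
    · intro ht
      simpa only [conj, ι_inv, inv_inv] using conj_ι_mem_tensorSet ht g⁻¹
    · intro ht
      simpa only [conj, mul_assoc, inv_mul_cancel_left, inv_mul_cancel, mul_one]
        using conj_ι_mem_tensorSet ht g
  refine eq_top_iff.2 fun x _ => PresentedGroup.generated_by _ _ ?_ x
  rintro (g | g)
  · exact hι g
  · have h := mul_mem (inv_mem (centralizer_le_normalizer _ (ι_mul_inv_ιφ_mem_centralizer g)))
      (hι g)
    rwa [mul_inv_rev, inv_inv, inv_mul_cancel_right] at h

instance tensorSquare_normal : (tensorSquare G).Normal := by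
  rw [← normalizer_eq_top_iff, eq_top_iff, ← normalizer_tensorSet G,
    tensorSquare_eq_closure_tensorSet]
  exact normalizer_le_normalizer_closure _

theorem conjNormal_tensorSquare_eq_comp (ρ : Nu G →* G)
    (hρ₁ : ∀ g : G, ρ (ι G g) = g) (hρ₂ : ∀ h : G, ρ (ιφ G h) = h) :
    (MulAut.conjNormal : Nu G →* MulAut (tensorSquare G)) =
      MulAut.conjNormal.comp ((ιHom G).comp ρ) := by
  refine PresentedGroup.ext fun x => ?_
  rcases x with g | g
  · show MulAut.conjNormal (ι G g) = MulAut.conjNormal (ι G (ρ (ι G g)))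
    rw [hρ₁]
  · show MulAut.conjNormal (ιφ G g) = MulAut.conjNormal (ι G (ρ (ιφ G g)))
    have h : ι G g * (ιφ G g)⁻¹ ∈ centralizer (tensorSquare G) := by
      rw [tensorSquare_eq_closure_tensorSet, centralizer_closure]
      exact ι_mul_inv_ιφ_mem_centralizer g
    rw [← MulAut.ker_conjNormal, MonoidHom.mem_ker, map_mul, map_inv, mul_inv_eq_one] at h
    rw [hρ₂, h]

/-- `Θ(G) = ker ρ` centralizes the subgroup `[G, G^φ]` of `ν(G)`. -/
theorem theta_centralizes (G : Type u) [Group G] (ρ : Nu G →* G)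
    (hρ₁ : ∀ g : G, ρ (ι G g) = g) (hρ₂ : ∀ h : G, ρ (ιφ G h) = h) :
    ∀ θ ∈ ρ.ker, ∀ x ∈ tensorSquare G, Commute θ x := by
  intro θ hθ x hx
  have hθ' : θ ∈ centralizer (tensorSquare G) := by
    rw [← MulAut.ker_conjNormal, MonoidHom.mem_ker, conjNormal_tensorSquare_eq_comp ρ hρ₁ hρ₂,
      MonoidHom.comp_apply, MonoidHom.comp_apply, MonoidHom.mem_ker.1 hθ, map_one, map_one]
  exact (mem_centralizer_iff.1 hθ' x hx).symm

end TensorNu
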